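/- Let d ≥ 3 be an integer and q a prime power. For α ∈ 𝔽_q let C_α(𝔽_q) denote the set of points [x:y:z] ∈ ℙ²(𝔽_q) with y·z^{d−1} = x^d − α·z^d. For a subset S ⊆ 𝔽_q, the union U = ∪_{α∈S} C_α(𝔽_q) is a blocking set in ℙ²(𝔽_q) if and only if for every pair (u, v) ∈ 𝔽_q × 𝔽_q there exists a ∈ 𝔽_q such that a^d + u·a + v ∈ S. -/

import Mathlib

open MvPolynomial

/-- The set of `𝔽_q`-points of the plane projective curve `{f = 0}` in `ℙ²(𝔽_q)`. -/
def projZeroSet {F : Type} [Field F] (f : MvPolynomial (Fin 3) F) :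
    Set (Projectivization F (Fin 3 → F)) :=
  {P | ∀ (v : Fin 3 → F) (hv : v ≠ 0), Projectivization.mk F v hv = P →
    MvPolynomial.eval v f = 0}

/-- `B` is a blocking set in `ℙ²(𝔽_q)`: it meets every line `ax + by + cz = 0`. -/
def IsBlockingSet {F : Type} [Field F] (B : Set (Projectivization F (Fin 3 → F))) : Prop :=
  ∀ a b c : F, ¬(a = 0 ∧ b = 0 ∧ c = 0) →
    ∃ P ∈ B, P ∈ projZeroSet (C a * X 0 + C b * X 1 + C c * X 2)

lemma eval_curve {F : Type} [Field F] (d : ℕ) (α : F) (w : Fin 3 → F) :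
    eval w (X 1 * X 2 ^ (d - 1) - X 0 ^ d + C α * X 2 ^ d)
      = w 1 * w 2 ^ (d - 1) - w 0 ^ d + α * w 2 ^ d := by simp

lemma eval_line {F : Type} [Field F] (a b c : F) (w : Fin 3 → F) :
    eval w (C a * X 0 + C b * X 1 + C c * X 2) = a * w 0 + b * w 1 + c * w 2 := by simp

lemma mem_curve {F : Type} [Field F] (d : ℕ) (hd : 1 ≤ d) (α : F)
    (v : Fin 3 → F) (hv : v ≠ 0)
    (h : v 1 * v 2 ^ (d - 1) - v 0 ^ d + α * v 2 ^ d = 0) :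
    Projectivization.mk F v hv ∈
      projZeroSet (X 1 * X 2 ^ (d - 1) - X 0 ^ d + C α * X 2 ^ d) := by
  intro w hw hmk
  rw [eval_curve]
  rw [Projectivization.mk_eq_mk_iff] at hmk
  obtain ⟨u, hu⟩ := hmk
  have h0 : w 0 = (u : F) * v 0 := by rw [← hu]; simp [Units.smul_def]
  have h1 : w 1 = (u : F) * v 1 := by rw [← hu]; simp [Units.smul_def]
  have h2 : w 2 = (u : F) * v 2 := by rw [← hu]; simp [Units.smul_def]
  have key : (u : F) * (u : F) ^ (d - 1) = (u : F) ^ d := by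
    rw [← pow_succ', Nat.sub_add_cancel hd]
  have hz : ((u : F) ^ d) ≠ 0 := pow_ne_zero _ u.ne_zero
  have : (u : F) ^ d * (v 1 * v 2 ^ (d - 1) - v 0 ^ d + α * v 2 ^ d) = 0 := by
    rw [h, mul_zero]
  have goal : w 1 * w 2 ^ (d - 1) - w 0 ^ d + α * w 2 ^ d
      = (u : F) ^ d * (v 1 * v 2 ^ (d - 1) - v 0 ^ d + α * v 2 ^ d) := by
    rw [h0, h1, h2, mul_pow, mul_pow, mul_pow]
    linear_combination (v 1 * v 2 ^ (d - 1)) * key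
  rw [goal, h, mul_zero]

lemma mem_line {F : Type} [Field F] (a b c : F) (v : Fin 3 → F) (hv : v ≠ 0)
    (h : a * v 0 + b * v 1 + c * v 2 = 0) :
    Projectivization.mk F v hv ∈ projZeroSet (C a * X 0 + C b * X 1 + C c * X 2) := by
  intro w hw hmk
  rw [eval_line]
  rw [Projectivization.mk_eq_mk_iff] at hmk
  obtain ⟨u, hu⟩ := hmk
  have h0 : w 0 = (u : F) * v 0 := by rw [← hu]; simp [Units.smul_def]
  have h1 : w 1 = (u : F) * v 1 := by rw [← hu]; simp [Units.smul_def]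
  have h2 : w 2 = (u : F) * v 2 := by rw [← hu]; simp [Units.smul_def]
  rw [h0, h1, h2]
  linear_combination (u : F) * h

/-- For `d ≥ 3` and `S ⊆ 𝔽_q`, the union `⋃_{α ∈ S} C_α(𝔽_q)` of the curves
`C_α : y z^{d−1} = x^d − α z^d` is a blocking set in `ℙ²(𝔽_q)` if and only if for every
`(u, v) ∈ 𝔽_q × 𝔽_q` there is `a ∈ 𝔽_q` with `a^d + u·a + v ∈ S`. -/
theorem stmt15 (d : ℕ) (hd : 3 ≤ d) (F : Type) [Field F] [Fintype F] (S : Set F) :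
    IsBlockingSet (⋃ α ∈ S,
        projZeroSet (X 1 * X 2 ^ (d - 1) - X 0 ^ d + C α * X 2 ^ d)) ↔
      ∀ u v : F, ∃ a : F, a ^ d + u * a + v ∈ S := by
  have hd1 : 1 ≤ d := by omega
  have hdm1 : d - 1 ≠ 0 := by omega
  have hd0 : d ≠ 0 := by omega
  constructor
  · intro h u v
    obtain ⟨P, hPU, hPL⟩ := h u 1 v (by simp)
    set w := P.rep with hwdef
    have hw : w ≠ 0 := P.rep_nonzero
    have hmk : Projectivization.mk F w hw = P := P.mk_rep
    have hline : u * w 0 + 1 * w 1 + v * w 2 = 0 := by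
      have := hPL w hw hmk
      rwa [eval_line] at this
    obtain ⟨α, hαS, hPα⟩ := Set.mem_iUnion₂.1 hPU
    have hcurve : w 1 * w 2 ^ (d - 1) - w 0 ^ d + α * w 2 ^ d = 0 := by
      have := hPα w hw hmk
      rwa [eval_curve] at this
    by_cases hz : w 2 = 0
    · exfalso
      have hx : w 0 = 0 := by
        have : w 0 ^ d = 0 := by
          have := hcurve
          rw [hz, zero_pow hdm1, zero_pow hd0] at this
          linear_combination -this
        exact pow_eq_zero_iff hd0 |>.1 this
      have hy : w 1 = 0 := by
        rw [hx, hz] at hline; linear_combination hline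
      apply hw
      funext i
      fin_cases i <;> simp [hx, hy, hz]
    · refine ⟨w 0 / w 2, ?_⟩
      have key : (w 0 / w 2) ^ d + u * (w 0 / w 2) + v = α := by
        have ha : (w 0 / w 2) * w 2 = w 0 := div_mul_cancel₀ _ hz
        have had : (w 0 / w 2) ^ d * w 2 ^ d = w 0 ^ d := by rw [← mul_pow, ha]
        have hpow : w 2 * w 2 ^ (d - 1) = w 2 ^ d := by
          rw [← pow_succ', Nat.sub_add_cancel hd1]
        have hzd : w 2 ^ d ≠ 0 := pow_ne_zero _ hz
        have main : ((w 0 / w 2) ^ d + u * (w 0 / w 2) + v) * w 2 ^ d = α * w 2 ^ d := by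
          linear_combination had - hcurve + w 2 ^ (d - 1) * hline -
            (u * (w 0 / w 2) + v) * hpow + u * w 2 ^ (d - 1) * ha
        exact mul_right_cancel₀ hzd main
      rw [key]; exact hαS
  · intro h a b c habc
    have hSne : S.Nonempty := by
      obtain ⟨a0, ha0⟩ := h 0 0
      exact ⟨_, ha0⟩
    by_cases hb : b = 0
    · subst hb
      by_cases ha : a = 0
      · subst ha
        obtain ⟨α, hα⟩ := hSne
        have hv : (![0, 1, 0] : Fin 3 → F) ≠ 0 := by
          intro hcon; simpa using congrFun hcon 1
        refine ⟨Projectivization.mk F ![0, 1, 0] hv, Set.mem_iUnion₂.2 ⟨α, hα, ?_⟩, ?_⟩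
        · apply mem_curve d hd1
          simp [zero_pow hdm1, zero_pow hd0]
        · apply mem_line
          simp
      · obtain ⟨α, hα⟩ := hSne
        set t := -c / a with ht
        have hv : (![t, t ^ d - α, 1] : Fin 3 → F) ≠ 0 := by
          intro hcon; simpa using congrFun hcon 2
        refine ⟨Projectivization.mk F _ hv, Set.mem_iUnion₂.2 ⟨α, hα, ?_⟩, ?_⟩
        · apply mem_curve d hd1
          simp [one_pow]
        · apply mem_line
          simp only [Matrix.cons_val_zero, Matrix.cons_val_one, Matrix.head_cons,
            Matrix.cons_val_two, Matrix.tail_cons]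
          rw [ht]
          field_simp
          ring
    · obtain ⟨a0, hα⟩ := h (a / b) (c / b)
      set α := a0 ^ d + a / b * a0 + c / b with hαdef
      have hv : (![a0, a0 ^ d - α, 1] : Fin 3 → F) ≠ 0 := by
        intro hcon; simpa using congrFun hcon 2
      refine ⟨Projectivization.mk F _ hv, Set.mem_iUnion₂.2 ⟨α, hα, ?_⟩, ?_⟩
      · apply mem_curve d hd1
        simp [one_pow]
      · apply mem_line
        simp only [Matrix.cons_val_zero, Matrix.cons_val_one, Matrix.head_cons,
          Matrix.cons_val_two, Matrix.tail_cons, hαdef]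
        field_simp
        ring
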